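/- Let q be a prime power, F_{q^3} the cubic extension of F_q, and α in F_q with x^2 - x - α irreducible over F_q. For any d in F_{q^3}, writing x = Tr(d) + Tr(d^{q^2+q}) + 1 + α and y = N(d) - Tr(d^{q^2+q})α - α^2, the identity N(d + d^2 - α) = (y + αx)^2 + xy holds. -/

import Mathlib

/-!
In a cubic extension of finite fields the Frobenius `σ x = x ^ q` generates the Galois group, so
`N z = z · σ z · σ² z` and `Tr z = z + σ z + σ² z`. Since `σ` fixes `α`, the conjugates of
`d + d ^ 2 - α` are `σⁱ d + (σⁱ d) ^ 2 - α`, and `d ^ (q ^ 2 + q) = σ d · σ² d`. The identity then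
becomes a polynomial identity in the three conjugates of `d`.
-/

open FiniteField

section CubicExtension

variable {F E : Type*} [Field F] [Field E] [Fintype F] [Fintype E] [Algebra F E]

theorem FiniteField.finrank_eq_of_card_eq_pow {q n : ℕ} (hF : Fintype.card F = q)
    (hE : Fintype.card E = q ^ n) : Module.finrank F E = n := by
  have hq : 1 < q := hF ▸ Fintype.one_lt_card
  have h := Module.card_eq_pow_finrank (K := F) (V := E)
  rw [hF, hE] at h
  exact Nat.pow_right_injective hq h.symm

variable (h3 : Module.finrank F E = 3)
include h3

local notation "σ" => frobeniusAlgEquivOfAlgebraic F E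

theorem FiniteField.frobeniusAlgEquivOfAlgebraic_apply_three (x : E) : σ (σ (σ x)) = x := by
  have h := pow_orderOf_eq_one (frobeniusAlgEquivOfAlgebraic F E)
  rw [orderOf_frobeniusAlgEquivOfAlgebraic, h3] at h
  exact DFunLike.congr_fun h x

theorem FiniteField.algebraMap_norm_eq_of_finrank_eq_three (x : E) :
    algebraMap F E (Algebra.norm F x) = x * σ x * σ (σ x) := by
  rw [algebraMap_norm_eq_prod_pow, h3]
  simp [Finset.prod_range_succ, pow_succ, pow_mul]

theorem FiniteField.algebraMap_trace_eq_of_finrank_eq_three (x : E) :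
    algebraMap F E (Algebra.trace F E x) = x + σ x + σ (σ x) := by
  rw [algebraMap_trace_eq_sum_pow, h3]
  simp [Finset.sum_range_succ, pow_succ, pow_mul]

end CubicExtension

theorem stmt5_general (F E : Type*) [Field F] [Field E] [Fintype F] [Fintype E] [Algebra F E]
    (q : ℕ) (hF : Fintype.card F = q) (hE : Fintype.card E = q ^ 3)
    (α : F)
    (d : E) :
    Algebra.norm F (d + d ^ 2 - algebraMap F E α) =
      (Algebra.norm F d - Algebra.trace F E (d ^ (q ^ 2 + q)) * α - α ^ 2 +
          α * (Algebra.trace F E d + Algebra.trace F E (d ^ (q ^ 2 + q)) + 1 + α)) ^ 2 +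
        (Algebra.trace F E d + Algebra.trace F E (d ^ (q ^ 2 + q)) + 1 + α) *
          (Algebra.norm F d - Algebra.trace F E (d ^ (q ^ 2 + q)) * α - α ^ 2) := by
  have h3 := finrank_eq_of_card_eq_pow hF hE
  have hσ3 := frobeniusAlgEquivOfAlgebraic_apply_three h3 d
  have hpow : d ^ (q ^ 2 + q) = frobeniusAlgEquivOfAlgebraic F E
      (frobeniusAlgEquivOfAlgebraic F E d) * frobeniusAlgEquivOfAlgebraic F E d := by
    simp [hF, pow_add, sq, pow_mul]
  apply (algebraMap F E).injective
  simp only [map_add, map_sub, map_mul, map_pow, map_one, hpow,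
    algebraMap_norm_eq_of_finrank_eq_three h3, algebraMap_trace_eq_of_finrank_eq_three h3,
    AlgEquiv.commutes, hσ3]
  ring

/-- With `x = Tr(d) + Tr(d^{q^2+q}) + 1 + α` and `y = N(d) - Tr(d^{q^2+q})α - α^2`, the identity
`N(d + d^2 - α) = (y + αx)^2 + xy` holds for all `d ∈ F_{q^3}`. -/
theorem stmt5 (F E : Type*) [Field F] [Field E] [Fintype F] [Fintype E] [Algebra F E]
    (q : ℕ) (hF : Fintype.card F = q) (hE : Fintype.card E = q ^ 3)
    (α : F) (hα : Irreducible (Polynomial.X ^ 2 - Polynomial.X - Polynomial.C α))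
    (d : E) :
    Algebra.norm F (d + d ^ 2 - algebraMap F E α) =
      (Algebra.norm F d - Algebra.trace F E (d ^ (q ^ 2 + q)) * α - α ^ 2 +
          α * (Algebra.trace F E d + Algebra.trace F E (d ^ (q ^ 2 + q)) + 1 + α)) ^ 2 +
        (Algebra.trace F E d + Algebra.trace F E (d ^ (q ^ 2 + q)) + 1 + α) *
          (Algebra.norm F d - Algebra.trace F E (d ^ (q ^ 2 + q)) * α - α ^ 2) :=
  stmt5_general F E q hF hE α d
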